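/- arXiv:1312.0911 — 2 statements merged into one kernel-verified Lean document; each statement's English description precedes it below -/
import Mathlib

section
/- Let r be an integer, let f be a modular form of weight r for the full modular group SL₂(ℤ), and let m ≥ 1 and k be integers. Define g : ℍ → ℂ on the upper half-plane by g(z) = (1/m) Σ_{j=0}^{m−1} e^{−2πi jk/m} f(z + j/m). Then g is (the function of) a modular form of weight r for the congruence subgroup Γ₁(m²); that is, there exists a modular form G of weight r and level Γ₁(m²) with G(z) = g(z) for all z ∈ ℍ. (If f has q-expansion Σ_{n≥0} a_n q^n, then g has q-expansion Σ_{n ≡ k (mod m)} a_n q^n, i.e., g is the sieved series f_{m,k}.) -/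
/-!
Translation `z ↦ z + t` is the slash action of `[1, t; 0, 1]`, and for `t = j / m` this matrix
conjugates `Γ₁(m²)` into `SL₂(ℤ)`. So each `z ↦ f (z + j / m)` is a modular form of level `Γ₁(m²)`,
and the sieved function is a linear combination of these.
-/

open UpperHalfPlane ModularForm Matrix.GeneralLinearGroup CongruenceSubgroup
open scoped MatrixGroups

lemma upperRightHom_smul (t : ℝ) (τ : ℍ) : upperRightHom t • τ = t +ᵥ τ := by
  ext
  simp [σ, num, denom, coe_vadd, UpperHalfPlane.coe_smul, add_comm]

lemma slash_upperRightHom_apply (k : ℤ) (f : ℍ → ℂ) (t : ℝ) (τ : ℍ) :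
    (f ∣[k] upperRightHom t) τ = f (t +ᵥ τ) := by
  rw [slash_apply, upperRightHom_smul]
  simp [σ, denom, val_det_apply]

/-- `[1, t; 0, 1] [a, b; c, d] [1, t; 0, 1]⁻¹ = [a + tc, b + t(d - a) - t²c; c, d - tc]`, which is
integral when `p = tc`, `q = t(d - a)` and `s = t²c` are. -/
lemma mem_conjGL_top_upperRightHom {t : ℝ} {γ : SL(2, ℤ)} {p q s : ℤ}
    (hp : (p : ℝ) = t * γ 1 0) (hq : (q : ℝ) = t * (γ 1 1 - γ 0 0))
    (hs : (s : ℝ) = t ^ 2 * γ 1 0) :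
    γ ∈ conjGL ⊤ (upperRightHom t) := by
  have hdet : (γ 0 0 + p) * (γ 1 1 - p) - (γ 0 1 + q - s) * γ 1 0 = 1 := by
    have hγ : (γ 0 0 * γ 1 1 - γ 0 1 * γ 1 0 : ℝ) = 1 := by
      exact_mod_cast (Matrix.det_fin_two (γ : Matrix (Fin 2) (Fin 2) ℤ)).symm.trans γ.det_coe
    refine Int.cast_injective (α := ℝ) ?_
    push_cast
    linear_combination hγ + (γ 1 1 - γ 0 0 - p - t * γ 1 0 : ℝ) * hp - γ 1 0 * hq + γ 1 0 * hs
  let δ : SL(2, ℤ) := ⟨!![γ 0 0 + p, γ 0 1 + q - s; γ 1 0, γ 1 1 - p], by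
    rwa [Matrix.det_fin_two_of]⟩
  have hδ : (δ : Matrix (Fin 2) (Fin 2) ℤ) = !![γ 0 0 + p, γ 0 1 + q - s; γ 1 0, γ 1 1 - p] := rfl
  refine mem_conjGL.2 ⟨δ, Subgroup.mem_top _, ?_⟩
  rw [eq_mul_inv_iff_mul_eq, Units.ext_iff]
  simp only [Units.val_mul, Matrix.SpecialLinearGroup.coe_GL_coe_matrix,
    Matrix.SpecialLinearGroup.map_apply_coe, hδ, upperRightHom_apply]
  ext i j
  fin_cases i <;> fin_cases j <;> simp [Matrix.mul_apply, Fin.sum_univ_two, hp, hq, hs] <;> ring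

lemma Gamma1_sq_le_conjGL_top (m : ℕ) (j : ℤ) :
    Gamma1 (m ^ 2) ≤ conjGL ⊤ (upperRightHom ((j : ℝ) / m)) := by
  intro γ hγ
  rcases eq_or_ne (m : ℝ) 0 with hm | hm
  · -- `j / 0 = 0`, so the conjugating matrix is the identity.
    exact mem_conjGL_top_upperRightHom (p := 0) (q := 0) (s := 0) (by simp [hm]) (by simp [hm])
      (by simp [hm])
  obtain ⟨ha, hd, hc⟩ := (Gamma1_mem _ γ).1 hγ
  obtain ⟨P, hP⟩ : (m : ℤ) ^ 2 ∣ γ 1 0 := by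
    exact_mod_cast (ZMod.intCast_zmod_eq_zero_iff_dvd _ _).1 hc
  obtain ⟨Q, hQ⟩ : (m : ℤ) ^ 2 ∣ γ 1 1 - γ 0 0 := by
    exact_mod_cast (ZMod.intCast_zmod_eq_zero_iff_dvd _ (m ^ 2)).1
      (by rw [Int.cast_sub, ha, hd, sub_self])
  apply mem_conjGL_top_upperRightHom (p := j * m * P) (q := j * m * Q) (s := j ^ 2 * P)
  · rw [hP]; push_cast; field_simp
  · rw [← Int.cast_sub, hQ]; push_cast; field_simp
  · rw [hP]; push_cast; field_simp

namespace ModularForm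

variable {Γ Γ' : Subgroup (GL (Fin 2) ℝ)} {k : ℤ}

def restrict (f : ModularForm Γ k) (h : Γ' ≤ Γ) : ModularForm Γ' k where
  toFun := f
  slash_action_eq' γ hγ := f.slash_action_eq' γ (h hγ)
  holo' := f.holo'
  bdd_at_cusps' hc := f.bdd_at_cusps' (hc.mono h)

noncomputable def translateGamma1 {r : ℤ} (f : ModularForm (⊤ : Subgroup SL(2, ℤ)) r)
    (m : ℕ) (j : ℤ) : ModularForm (Gamma1 (m ^ 2)) r :=
  (translate f (upperRightHom ((j : ℝ) / m))).restrict
    (Subgroup.map_le_iff_le_comap.2 (Gamma1_sq_le_conjGL_top m j))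

lemma translateGamma1_apply {r : ℤ} (f : ModularForm (⊤ : Subgroup SL(2, ℤ)) r)
    (m : ℕ) (j : ℤ) (τ : ℍ) : f.translateGamma1 m j τ = f (((j : ℝ) / m) +ᵥ τ) :=
  slash_upperRightHom_apply r f _ τ

end ModularForm

theorem sieve_modularForm_general (r : ℤ) (f : ModularForm (⊤ : Subgroup (Matrix.SpecialLinearGroup (Fin 2) ℤ)) r)
    (m : ℕ) (k : ℤ) :
    ∃ G : ModularForm (CongruenceSubgroup.Gamma1 (m ^ 2)) r, ∀ z : UpperHalfPlane,
      G z = (m : ℂ)⁻¹ * ∑ j ∈ Finset.range m,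
        Complex.exp (-2 * Real.pi * Complex.I * (j : ℂ) * (k : ℂ) / (m : ℂ)) *
          f (((j : ℝ) / (m : ℝ)) +ᵥ z) := by
  refine ⟨(m : ℂ)⁻¹ • ∑ j ∈ Finset.range m,
      Complex.exp (-2 * Real.pi * Complex.I * (j : ℂ) * (k : ℂ) / (m : ℂ)) • f.translateGamma1 m j,
    fun z => ?_⟩
  simp [ModularForm.translateGamma1_apply]

/-- If `f` is a modular form of weight `r` for the full modular group `SL₂(ℤ)`,
then the sieved function `g(z) = (1/m) Σ_{j=0}^{m−1} e^{−2πijk/m} f(z + j/m)` is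
(the function of) a modular form of weight `r` for the congruence subgroup `Γ₁(m²)`. -/
theorem sieve_modularForm (r : ℤ) (f : ModularForm (⊤ : Subgroup (Matrix.SpecialLinearGroup (Fin 2) ℤ)) r)
    (m : ℕ) (hm : 1 ≤ m) (k : ℤ) :
    ∃ G : ModularForm (CongruenceSubgroup.Gamma1 (m ^ 2)) r, ∀ z : UpperHalfPlane,
      G z = (m : ℂ)⁻¹ * ∑ j ∈ Finset.range m,
        Complex.exp (-2 * Real.pi * Complex.I * (j : ℂ) * (k : ℂ) / (m : ℂ)) *
          f (((j : ℝ) / (m : ℝ)) +ᵥ z) :=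
  sieve_modularForm_general r f m k
end

section
/- Let B be the symmetric bilinear form on ℤ¹⁰ given by B(x,y) = x₀y₀ − Σ_{i=1}^{9} x_i y_i, let v = 3e₀ − e₁ − ⋯ − e₉ and w = e₁. For every nonzero x ∈ ℤ¹⁰ with B(x,v) = 0 and B(x,w) = 0, one has B(x,x) ≤ −2. (The orthogonal complement of the section and fibre classes in Γ_{1,9} is negative definite, and being even, every nonzero vector in it has square at most −2.) -/
/-!
The condition `B(x, w) = 0` kills `x₁`, and `B(x, v) = 0` says `3x₀ = −(x₂ + ⋯ + x₉)`, so
Cauchy–Schwarz over these eight coordinates gives `9x₀² ≤ 8 Σ xᵢ²`, whence `B(x, x) < 0` unless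
`x = 0`. Since every coordinate of `v` is odd, `B(x, x) ≡ B(x, v) = 0 (mod 2)`.
-/

/-- The intersection form of `Γ_{1,9}`: `B(x,y) = x₀y₀ − Σ_{i=1}^{9} x_i y_i`. -/
def B19 (x y : Fin 10 → ℤ) : ℤ :=
  x 0 * y 0 - ∑ i : Fin 9, x i.succ * y i.succ

/-- The fibre class `v = 3e₀ − e₁ − ⋯ − e₉`. -/
def fibreClass : Fin 10 → ℤ := fun i => if i = 0 then 3 else -1

/-- The section class `w = e₁`. -/
def sectionClass : Fin 10 → ℤ := fun i => if i = 1 then 1 else 0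

open Finset

theorem sq_sum_le_mul_sum_sq_of_apply_zero_eq_zero {R : Type*} [CommRing R] [LinearOrder R]
    [IsStrictOrderedRing R] {n : ℕ} (f : Fin (n + 1) → R) (hf : f 0 = 0) :
    (∑ i, f i) ^ 2 ≤ n * ∑ i, f i ^ 2 := by
  simpa [Fin.sum_univ_succ, hf] using
    sq_sum_le_card_mul_sum_sq (s := univ) (f := fun i : Fin n => f i.succ)

theorem B19_sectionClass (x : Fin 10 → ℤ) : B19 x sectionClass = -x 1 := by
  simp [B19, sectionClass, Fin.sum_univ_succ]

theorem B19_fibreClass (x : Fin 10 → ℤ) : B19 x fibreClass = 3 * x 0 + ∑ i : Fin 9, x i.succ := by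
  simp [B19, fibreClass, mul_comm]

theorem B19_self (x : Fin 10 → ℤ) : B19 x x = x 0 ^ 2 - ∑ i : Fin 9, x i.succ ^ 2 := by
  simp only [B19, sq]

theorem even_B19_self_sub_B19_fibreClass (x : Fin 10 → ℤ) :
    Even (B19 x x - B19 x fibreClass) := by
  have h : B19 x x - B19 x fibreClass =
      x 0 * (x 0 + 1) - ∑ i : Fin 9, x i.succ * (x i.succ + 1) - 2 * (2 * x 0) := by
    rw [B19_self, B19_fibreClass]
    simp only [mul_add, mul_one, sum_add_distrib, sq]
    ring
  rw [h]
  exact ((Int.even_mul_succ_self _).sub (even_sum _ fun i _ => Int.even_mul_succ_self _)).sub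
    (even_two_mul _)

theorem nine_mul_B19_self_le (x : Fin 10 → ℤ) (hv : B19 x fibreClass = 0)
    (hw : B19 x sectionClass = 0) : 9 * B19 x x ≤ -∑ i : Fin 9, x i.succ ^ 2 := by
  rw [B19_sectionClass, neg_eq_zero] at hw
  have hsum : ∑ i : Fin 9, x i.succ = -(3 * x 0) := by linarith [B19_fibreClass x]
  have hcs : (3 * x 0) ^ 2 ≤ 8 * ∑ i : Fin 9, x i.succ ^ 2 := by
    simpa [hsum] using sq_sum_le_mul_sum_sq_of_apply_zero_eq_zero (fun i : Fin 9 => x i.succ) hw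
  linarith [B19_self x]

theorem B19_self_neg (x : Fin 10 → ℤ) (hx : x ≠ 0) (hv : B19 x fibreClass = 0)
    (hw : B19 x sectionClass = 0) : B19 x x < 0 := by
  suffices hS : 0 < ∑ i : Fin 9, x i.succ ^ 2 by linarith [nine_mul_B19_self_le x hv hw]
  refine (sum_nonneg fun i _ => sq_nonneg _).lt_of_ne' fun hS => hx ?_
  have htail (i : Fin 9) : x i.succ = 0 :=
    pow_eq_zero_iff two_ne_zero |>.mp <|
      (sum_eq_zero_iff_of_nonneg fun i _ => sq_nonneg _).mp hS i (mem_univ i)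
  have h0 : x 0 = 0 := by simpa [B19_fibreClass, htail] using hv
  funext i
  exact Fin.cases h0 htail i

/-- The orthogonal complement of the section and fibre classes in `Γ_{1,9}` is
negative definite and even: every nonzero `x` with `B(x,v) = 0` and `B(x,w) = 0`
has `B(x,x) ≤ −2`. -/
theorem orthogonal_complement_neg_def (x : Fin 10 → ℤ) (hx : x ≠ 0)
    (hv : B19 x fibreClass = 0) (hw : B19 x sectionClass = 0) :
    B19 x x ≤ -2 := by
  obtain ⟨k, hk⟩ : Even (B19 x x) := by
    simpa [hv] using even_B19_self_sub_B19_fibreClass x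
  have := B19_self_neg x hx hv hw
  omega
end
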